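/- arXiv:math/0503272 — 4 statements merged into one kernel-verified Lean document; each statement's English description precedes it below -/
import Mathlib

section
/- Let C = A ⊕ B be a 1-truncated conformal algebra. On L(A ⊕ B) = (A ⊕ B) ⊗ ℂ[t,t⁻¹] define a bilinear product by [a⊗tᵐ, a'⊗tⁿ] = 0, [a⊗tᵐ, b⊗tⁿ] = a₀b ⊗ t^{m+n}, [b⊗tⁿ, a⊗tᵐ] = b₀a ⊗ t^{m+n}, and [b⊗tᵐ, b'⊗tⁿ] = b₀b' ⊗ t^{m+n} + m(b₁b') ⊗ t^{m+n-1} for a, a' ∈ A, b, b' ∈ B, m, n ∈ ℤ. Let ∂̂ = ∂⊗1 + 1⊗d/dt : L(A) → L(A⊕B). Then ∂̂L(A) is a two-sided ideal of the nonassociative algebra (L(A⊕B), [·,·]), and the quotient L(A⊕B)/∂̂L(A) is a Lie algebra. -/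
noncomputable section

structure OneTrunc (C0 C1 : Type*) [AddCommGroup C0] [Module ℂ C0]
    [AddCommGroup C1] [Module ℂ C1] where
  d : C0 →ₗ[ℂ] C1
  oa : C1 →ₗ[ℂ] C0 →ₗ[ℂ] C0
  ob : C1 →ₗ[ℂ] C1 →ₗ[ℂ] C1
  p : C1 →ₗ[ℂ] C1 →ₗ[ℂ] C0
  da_ob : ∀ a v, ob (d a) v = 0
  da_oa : ∀ a c, oa (d a) c = 0
  da_p : ∀ a v, p (d a) v = oa v a
  d_oa : ∀ u a, d (oa u a) = ob u (d a)
  skew : ∀ u v, ob u v = - ob v u + d (p v u)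
  psymm : ∀ u v, p u v = p v u
  assoc_b : ∀ u v w, ob u (ob v w) = ob v (ob u w) + ob (ob u v) w
  assoc_p : ∀ u v w, oa u (p v w) = p v (ob u w) + p (ob u v) w
  assoc_a : ∀ u v c, oa u (oa v c) = oa v (oa u c) + oa (ob u v) c

variable {A B : Type*} [AddCommGroup A] [Module ℂ A] [AddCommGroup B] [Module ℂ B]

/-- `L(A ⊕ B) = (A ⊕ B) ⊗ ℂ[t,t⁻¹]`, realized as pairs of finitely supported
functions `ℤ → A`, `ℤ → B` (the value at `n` is the coefficient of `tⁿ`). -/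
abbrev LoopSp (A B : Type*) [AddCommGroup A] [AddCommGroup B] :=
  (ℤ →₀ A) × (ℤ →₀ B)

/-- The bracket on `L(A ⊕ B)`:
`[a⊗tᵐ, a'⊗tⁿ] = 0`, `[a⊗tᵐ, b⊗tⁿ] = a₀b ⊗ t^{m+n}`,
`[b⊗tⁿ, a⊗tᵐ] = b₀a ⊗ t^{m+n}`,
`[b⊗tᵐ, b'⊗tⁿ] = b₀b' ⊗ t^{m+n} + m (b₁b') ⊗ t^{m+n-1}`
(recall `a₀b = -b₀a = -oa b a`). -/
def brkt (T : OneTrunc A B) (x y : LoopSp A B) : LoopSp A B :=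
  ( (x.2.sum fun m b => y.1.sum fun n a => Finsupp.single (m + n) (T.oa b a))
      - (x.1.sum fun m a => y.2.sum fun n b => Finsupp.single (m + n) (T.oa b a))
      + (x.2.sum fun m b => y.2.sum fun n b' =>
          Finsupp.single (m + n - 1) ((m : ℂ) • T.p b b')),
    x.2.sum fun m b => y.2.sum fun n b' => Finsupp.single (m + n) (T.ob b b') )

/-- `∂̂ = ∂ ⊗ 1 + 1 ⊗ d/dt : L(A) → L(A ⊕ B)`. -/
def dhat (T : OneTrunc A B) (f : ℤ →₀ A) : LoopSp A B :=
  ( f.sum fun n a => Finsupp.single (n - 1) ((n : ℂ) • a),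
    f.sum fun n a => Finsupp.single n (T.d a) )

section Aux

/-- generic weighted convolution -/
def cnv {M N P : Type*} [AddCommGroup M] [Module ℂ M] [AddCommGroup N] [Module ℂ N]
    [AddCommGroup P] [Module ℂ P]
    (φ : M →ₗ[ℂ] N →ₗ[ℂ] P) (s : ℤ → ℤ → ℤ) (w : ℤ → ℂ)
    (x : ℤ →₀ M) (y : ℤ →₀ N) : ℤ →₀ P :=
  x.sum fun m b => y.sum fun n a => Finsupp.single (s m n) (w m • φ b a)

variable {M N P : Type*} [AddCommGroup M] [Module ℂ M] [AddCommGroup N] [Module ℂ N]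
    [AddCommGroup P] [Module ℂ P]
    (φ : M →ₗ[ℂ] N →ₗ[ℂ] P) (s : ℤ → ℤ → ℤ) (w : ℤ → ℂ)

@[simp] lemma cnv_zero_left (y : ℤ →₀ N) : cnv φ s w 0 y = 0 := by
  simp [cnv]

@[simp] lemma cnv_zero_right (x : ℤ →₀ M) : cnv φ s w x 0 = 0 := by
  simp [cnv]

lemma cnv_add_left (x x' : ℤ →₀ M) (y : ℤ →₀ N) :
    cnv φ s w (x + x') y = cnv φ s w x y + cnv φ s w x' y := by
  unfold cnv
  refine Finsupp.sum_add_index' (fun m => ?_) (fun m b b' => ?_)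
  · simp
  · rw [← Finsupp.sum_add]
    refine Finsupp.sum_congr fun n _ => ?_
    simp [smul_add, Finsupp.single_add]

lemma cnv_add_right (x : ℤ →₀ M) (y y' : ℤ →₀ N) :
    cnv φ s w x (y + y') = cnv φ s w x y + cnv φ s w x y' := by
  unfold cnv
  rw [← Finsupp.sum_add]
  refine Finsupp.sum_congr fun m _ => ?_
  refine Finsupp.sum_add_index' (fun n => ?_) (fun n a a' => ?_)
  · simp
  · simp [smul_add, Finsupp.single_add]

lemma cnv_smul_left (c : ℂ) (x : ℤ →₀ M) (y : ℤ →₀ N) :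
    cnv φ s w (c • x) y = c • cnv φ s w x y := by
  unfold cnv
  rw [Finsupp.sum_smul_index' (fun m => by simp), Finsupp.smul_sum]
  refine Finsupp.sum_congr fun m _ => ?_
  rw [Finsupp.smul_sum]
  refine Finsupp.sum_congr fun n _ => ?_
  rw [map_smul, LinearMap.smul_apply, Finsupp.smul_single, smul_comm]

lemma cnv_smul_right (c : ℂ) (x : ℤ →₀ M) (y : ℤ →₀ N) :
    cnv φ s w x (c • y) = c • cnv φ s w x y := by
  unfold cnv
  rw [Finsupp.smul_sum]
  refine Finsupp.sum_congr fun m _ => ?_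
  rw [Finsupp.sum_smul_index' (fun n => by simp), Finsupp.smul_sum]
  refine Finsupp.sum_congr fun n _ => ?_
  rw [map_smul, Finsupp.smul_single, smul_comm]

@[simp] lemma cnv_single_single (m n : ℤ) (b : M) (a : N) :
    cnv φ s w (Finsupp.single m b) (Finsupp.single n a)
      = Finsupp.single (s m n) (w m • φ b a) := by
  unfold cnv
  rw [Finsupp.sum_single_index (by simp), Finsupp.sum_single_index (by simp)]

end Aux


set_option linter.unusedSectionVars false
section Gen

variable (T : OneTrunc A B)

def eA (m : ℤ) (a : A) : LoopSp A B := (Finsupp.single m a, 0)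
def eB (m : ℤ) (b : B) : LoopSp A B := (0, Finsupp.single m b)

@[simp] lemma eA_zero (m : ℤ) : (eA m 0 : LoopSp A B) = 0 := by simp [eA]
@[simp] lemma eB_zero (m : ℤ) : (eB m 0 : LoopSp A B) = 0 := by simp [eB]
lemma eA_add (m : ℤ) (a a' : A) : (eA m (a + a') : LoopSp A B) = eA m a + eA m a' := by
  simp [eA, Finsupp.single_add, Prod.ext_iff]
lemma eB_add (m : ℤ) (b b' : B) : (eB m (b + b') : LoopSp A B) = eB m b + eB m b' := by
  simp [eB, Finsupp.single_add, Prod.ext_iff]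
lemma eA_smul (c : ℂ) (m : ℤ) (a : A) : (eA m (c • a) : LoopSp A B) = c • eA m a := by
  simp [eA, Prod.ext_iff]
lemma eB_smul (c : ℂ) (m : ℤ) (b : B) : (eB m (c • b) : LoopSp A B) = c • eB m b := by
  simp [eB, Prod.ext_iff]
lemma eA_neg (m : ℤ) (a : A) : (eA m (-a) : LoopSp A B) = - eA m a := by
  simp [eA, Prod.ext_iff]

lemma brkt_eq (x y : LoopSp A B) :
    brkt T x y =
      ( cnv T.oa (fun m n => m + n) (fun _ => 1) x.2 y.1
          - cnv T.oa.flip (fun m n => m + n) (fun _ => 1) x.1 y.2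
          + cnv T.p (fun m n => m + n - 1) (fun m => (m : ℂ)) x.2 y.2,
        cnv T.ob (fun m n => m + n) (fun _ => 1) x.2 y.2 ) := by
  simp only [brkt, cnv, one_smul, LinearMap.flip_apply]

lemma brkt_add_left (x x' y : LoopSp A B) :
    brkt T (x + x') y = brkt T x y + brkt T x' y := by
  rw [brkt_eq T (x + x'), brkt_eq T x y, brkt_eq T x' y]
  simp only [Prod.fst_add, Prod.snd_add, cnv_add_left, Prod.mk_add_mk, Prod.mk.injEq]
  exact ⟨by abel, trivial⟩

lemma brkt_add_right (x y y' : LoopSp A B) :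
    brkt T x (y + y') = brkt T x y + brkt T x y' := by
  rw [brkt_eq T x (y + y'), brkt_eq T x y, brkt_eq T x y']
  simp only [Prod.fst_add, Prod.snd_add, cnv_add_right, Prod.mk_add_mk, Prod.mk.injEq]
  exact ⟨by abel, trivial⟩

lemma brkt_smul_left (c : ℂ) (x y : LoopSp A B) :
    brkt T (c • x) y = c • brkt T x y := by
  simp only [brkt_eq, Prod.smul_fst, Prod.smul_snd, cnv_smul_left, Prod.smul_mk,
    Prod.mk.injEq, smul_add, smul_sub]

lemma brkt_smul_right (c : ℂ) (x y : LoopSp A B) :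
    brkt T x (c • y) = c • brkt T x y := by
  simp only [brkt_eq, Prod.smul_fst, Prod.smul_snd, cnv_smul_right, Prod.smul_mk,
    Prod.mk.injEq, smul_add, smul_sub]

@[simp] lemma brkt_zero_left (y : LoopSp A B) : brkt T 0 y = 0 := by
  simp [brkt_eq, Prod.ext_iff]

@[simp] lemma brkt_zero_right (x : LoopSp A B) : brkt T x 0 = 0 := by
  simp [brkt_eq, Prod.ext_iff]

lemma brkt_neg_left (x y : LoopSp A B) : brkt T (-x) y = - brkt T x y := by
  have := brkt_smul_left T (-1) x y
  simpa using this

lemma brkt_neg_right (x y : LoopSp A B) : brkt T x (-y) = - brkt T x y := by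
  have := brkt_smul_right T (-1) x y
  simpa using this

lemma brkt_sub_left (x x' y : LoopSp A B) :
    brkt T (x - x') y = brkt T x y - brkt T x' y := by
  rw [sub_eq_add_neg, brkt_add_left, brkt_neg_left, sub_eq_add_neg]

@[simp] lemma brkt_eA_eA (m n : ℤ) (a a' : A) :
    brkt T (eA m a : LoopSp A B) (eA n a') = 0 := by
  simp [brkt_eq, eA, Prod.ext_iff]

@[simp] lemma brkt_eA_eB (m n : ℤ) (a : A) (b : B) :
    brkt T (eA m a : LoopSp A B) (eB n b) = - eA (m + n) (T.oa b a) := by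
  simp [brkt_eq, eA, eB, Prod.ext_iff, Finsupp.single_neg]

@[simp] lemma brkt_eB_eA (m n : ℤ) (b : B) (a : A) :
    brkt T (eB m b : LoopSp A B) (eA n a) = eA (m + n) (T.oa b a) := by
  simp [brkt_eq, eA, eB, Prod.ext_iff]

@[simp] lemma brkt_eB_eB (m n : ℤ) (b b' : B) :
    brkt T (eB m b : LoopSp A B) (eB n b')
      = (m : ℂ) • eA (m + n - 1) (T.p b b') + eB (m + n) (T.ob b b') := by
  simp [brkt_eq, eA, eB, Prod.ext_iff]

@[simp] lemma dhat_zero : dhat T 0 = 0 := by simp [dhat, Prod.ext_iff]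

lemma dhat_add (f g : ℤ →₀ A) : dhat T (f + g) = dhat T f + dhat T g := by
  unfold dhat
  rw [Prod.mk_add_mk, Prod.mk.injEq]
  constructor
  · exact Finsupp.sum_add_index' (fun n => by simp) (fun n a a' => by
      simp [smul_add, Finsupp.single_add])
  · exact Finsupp.sum_add_index' (fun n => by simp) (fun n a a' => by
      simp [Finsupp.single_add])

lemma dhat_smul (c : ℂ) (f : ℤ →₀ A) : dhat T (c • f) = c • dhat T f := by
  unfold dhat
  rw [Prod.smul_mk, Prod.mk.injEq]
  constructor
  · rw [Finsupp.sum_smul_index' (fun n => by simp), Finsupp.smul_sum]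
    exact Finsupp.sum_congr fun n _ => by rw [Finsupp.smul_single, smul_comm]
  · rw [Finsupp.sum_smul_index' (fun n => by simp), Finsupp.smul_sum]
    exact Finsupp.sum_congr fun n _ => by rw [map_smul, Finsupp.smul_single]

lemma dhat_single (n : ℤ) (a : A) :
    dhat T (Finsupp.single n a) = (n : ℂ) • eA (n - 1) a + eB n (T.d a) := by
  unfold dhat
  rw [Finsupp.sum_single_index (by simp), Finsupp.sum_single_index (by simp)]
  simp [eA, eB, Prod.ext_iff]

lemma loop_induction {P : LoopSp A B → Prop} (h0 : P 0)
    (hadd : ∀ x y, P x → P y → P (x + y))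
    (hA : ∀ m a, P (eA m a)) (hB : ∀ m b, P (eB m b)) : ∀ x : LoopSp A B, P x := by
  have hfst : ∀ f : ℤ →₀ A, P (f, 0) := by
    intro f
    induction f using Finsupp.induction with
    | zero => exact h0
    | single_add n a f _ _ ih =>
        have : ((Finsupp.single n a + f, 0) : LoopSp A B) = eA n a + (f, 0) := by
          simp [eA, Prod.ext_iff]
        rw [this]; exact hadd _ _ (hA n a) ih
  have hsnd : ∀ g : ℤ →₀ B, P ((0, g) : LoopSp A B) := by
    intro g
    induction g using Finsupp.induction with
    | zero => exact h0
    | single_add n b g _ _ ih =>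
        have : ((0, Finsupp.single n b + g) : LoopSp A B) = eB n b + (0, g) := by
          simp [eB, Prod.ext_iff]
        rw [this]; exact hadd _ _ (hB n b) ih
  intro x
  have : x = (x.1, 0) + (0, x.2) := by simp [Prod.ext_iff]
  rw [this]; exact hadd _ _ (hfst x.1) (hsnd x.2)

end Gen

section Ident
set_option linter.unusedSectionVars false
variable (T : OneTrunc A B)

lemma key2' (u v w : B) :
    T.oa v (T.p u w) = T.p u (T.ob v w) + T.oa w (T.p u v) - T.p (T.ob u v) w := by
  have h2 : T.oa v (T.p u w) = T.p u (T.ob v w) + T.p (T.ob v u) w := T.assoc_p v u w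
  have h3 : T.p (T.ob u v) w + T.p (T.ob v u) w = T.oa w (T.p u v) := by
    rw [← LinearMap.add_apply, ← map_add]
    have hb : T.ob u v + T.ob v u = T.d (T.p v u) := by rw [T.skew u v]; abel
    rw [hb, T.da_p, T.psymm]
  rw [h2, ← h3]
  abel

lemma eA_sub (m : ℤ) (a a' : A) : (eA m (a - a') : LoopSp A B) = eA m a - eA m a' := by
  simp [eA, Finsupp.single_sub, Prod.ext_iff]
lemma eB_neg (m : ℤ) (b : B) : (eB m (-b) : LoopSp A B) = - eB m b := by
  simp [eB, Prod.ext_iff]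

lemma jacobi (x y z : LoopSp A B) :
    brkt T x (brkt T y z) = brkt T (brkt T x y) z + brkt T y (brkt T x z) := by
  induction x using loop_induction with
  | h0 => simp
  | hadd x x' hx hx' => simp only [brkt_add_left, brkt_add_right, hx, hx']; abel
  | hA l a =>
    induction y using loop_induction with
    | h0 => simp
    | hadd y y' hy hy' => simp only [brkt_add_left, brkt_add_right, hy, hy']; abel
    | hA m a' =>
      induction z using loop_induction with
      | h0 => simp
      | hadd z z' hz hz' => simp only [brkt_add_left, brkt_add_right, hz, hz']; abel
      | hA n a'' => simp
      | hB n b => simp [brkt_neg_left, brkt_neg_right]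
    | hB m u =>
      induction z using loop_induction with
      | h0 => simp
      | hadd z z' hz hz' => simp only [brkt_add_left, brkt_add_right, hz, hz']; abel
      | hA n a' => simp [brkt_neg_left, brkt_neg_right]
      | hB n v =>
        simp only [brkt_eB_eB, brkt_add_right, brkt_smul_right, brkt_eA_eA, brkt_eA_eB,
          brkt_add_left, brkt_smul_left, brkt_neg_left, brkt_neg_right, brkt_eB_eA,
          brkt_zero_left, brkt_zero_right, smul_zero, zero_add, add_zero, neg_neg]
        rw [show l + (m + n) = l + m + n from by ring, show m + (l + n) = l + m + n from by ring]
        rw [T.assoc_a u v a, eA_add]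
        abel
  | hB l u =>
    induction y using loop_induction with
    | h0 => simp
    | hadd y y' hy hy' => simp only [brkt_add_left, brkt_add_right, hy, hy']; abel
    | hA m a =>
      induction z using loop_induction with
      | h0 => simp
      | hadd z z' hz hz' => simp only [brkt_add_left, brkt_add_right, hz, hz']; abel
      | hA n a' => simp
      | hB n v =>
        simp only [brkt_eB_eB, brkt_add_right, brkt_smul_right, brkt_eA_eA, brkt_eA_eB,
          brkt_add_left, brkt_smul_left, brkt_neg_left, brkt_neg_right, brkt_eB_eA,
          brkt_zero_left, brkt_zero_right, smul_zero, zero_add, add_zero, neg_neg]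
        rw [show l + (m + n) = l + m + n from by ring, show m + (l + n) = l + m + n from by ring]
        rw [T.assoc_a u v a, eA_add]
        abel
    | hB m v =>
      induction z using loop_induction with
      | h0 => simp
      | hadd z z' hz hz' => simp only [brkt_add_left, brkt_add_right, hz, hz']; abel
      | hA n a =>
        simp only [brkt_eB_eB, brkt_add_right, brkt_smul_right, brkt_eA_eA, brkt_eA_eB,
          brkt_add_left, brkt_smul_left, brkt_neg_left, brkt_neg_right, brkt_eB_eA,
          brkt_zero_left, brkt_zero_right, smul_zero, zero_add, add_zero, neg_neg]
        rw [show l + (m + n) = l + m + n from by ring, show m + (l + n) = l + m + n from by ring]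
        rw [T.assoc_a u v a, eA_add]
        abel
      | hB n w =>
        simp only [brkt_eB_eB, brkt_add_right, brkt_smul_right, brkt_eA_eA, brkt_eA_eB,
          brkt_add_left, brkt_smul_left, brkt_neg_left, brkt_neg_right, brkt_eB_eA,
          brkt_zero_left, brkt_zero_right, smul_zero, zero_add, add_zero, neg_neg, smul_neg]
        push_cast
        ring_nf
        rw [T.assoc_b u v w, T.assoc_p u v w, key2' T u v w, eA_add, eA_sub, eA_add, eB_add]
        module

end Ident

section Ideal
set_option linter.unusedSectionVars false
variable (T : OneTrunc A B)

lemma brkt_dhat_single_left (n : ℤ) (a : A) (y : LoopSp A B) :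
    brkt T (dhat T (Finsupp.single n a)) y = 0 := by
  induction y using loop_induction with
  | h0 => simp
  | hadd y y' hy hy' => rw [brkt_add_right, hy, hy', add_zero]
  | hA m a' =>
      rw [dhat_single, brkt_add_left, brkt_smul_left, brkt_eA_eA, brkt_eB_eA, T.da_oa]
      simp
  | hB m b =>
      rw [dhat_single, brkt_add_left, brkt_smul_left, brkt_eA_eB, brkt_eB_eB,
        T.da_p, T.da_ob, eB_zero, show n - 1 + m = n + m - 1 from by ring]
      module

lemma brkt_dhat_left (f : ℤ →₀ A) (y : LoopSp A B) :
    brkt T (dhat T f) y = 0 := by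
  induction f using Finsupp.induction with
  | zero => simp
  | single_add n a f _ _ ih =>
      rw [dhat_add, brkt_add_left, ih, add_zero, brkt_dhat_single_left]

lemma brkt_dhat_right (y : LoopSp A B) (f : ℤ →₀ A) :
    brkt T y (dhat T f)
      = dhat T (cnv T.oa (fun m n => m + n) (fun _ => 1) y.2 f) := by
  induction y using loop_induction with
  | h0 => simp
  | hadd y y' hy hy' =>
      rw [brkt_add_left, hy, hy', Prod.snd_add, cnv_add_left, dhat_add]
  | hA m a' =>
      have h2 : (eA m a' : LoopSp A B).2 = 0 := rfl
      rw [h2, cnv_zero_left, dhat_zero]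
      induction f using Finsupp.induction with
      | zero => simp
      | single_add n a f _ _ ih =>
          rw [dhat_add, brkt_add_right, ih, add_zero, dhat_single, brkt_add_right,
            brkt_smul_right, brkt_eA_eA, brkt_eA_eB, T.da_oa]
          simp
  | hB m b =>
      have h2 : (eB m b : LoopSp A B).2 = Finsupp.single m b := rfl
      rw [h2]
      induction f using Finsupp.induction with
      | zero => simp
      | single_add n a f _ _ ih =>
          rw [dhat_add, brkt_add_right, ih, cnv_add_right, dhat_add]
          congr 1
          rw [dhat_single, brkt_add_right, brkt_smul_right, brkt_eB_eA, brkt_eB_eB,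
            cnv_single_single, one_smul, dhat_single,
            T.psymm b (T.d a), T.da_p, ← T.d_oa,
            show m + (n - 1) = m + n - 1 from by ring]
          push_cast
          module

lemma brkt_symm (x y : LoopSp A B) :
    brkt T x y + brkt T y x
      = dhat T (cnv T.p (fun m n => m + n) (fun _ => 1) x.2 y.2) := by
  induction x using loop_induction with
  | h0 => simp
  | hadd x x' hx hx' =>
      rw [brkt_add_left, brkt_add_right, Prod.snd_add, cnv_add_left, dhat_add, ← hx, ← hx']
      abel
  | hA l a =>
      have h2 : (eA l a : LoopSp A B).2 = 0 := rfl
      rw [h2, cnv_zero_left, dhat_zero]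
      induction y using loop_induction with
      | h0 => simp
      | hadd y y' hy hy' =>
          rw [brkt_add_left, brkt_add_right, add_add_add_comm, hy, hy', add_zero]
      | hA m a' => simp
      | hB m b =>
          rw [brkt_eA_eB, brkt_eB_eA, show m + l = l + m from by ring]
          abel
  | hB l b =>
      have h2 : (eB l b : LoopSp A B).2 = Finsupp.single l b := rfl
      rw [h2]
      induction y using loop_induction with
      | h0 => simp
      | hadd y y' hy hy' =>
          rw [brkt_add_left, brkt_add_right, Prod.snd_add, cnv_add_right, dhat_add,
            ← hy, ← hy']
          abel
      | hA m a =>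
          have h3 : (eA m a : LoopSp A B).2 = 0 := rfl
          rw [h3, cnv_zero_right, dhat_zero, brkt_eA_eB, brkt_eB_eA,
            show m + l = l + m from by ring]
          abel
      | hB m b' =>
          have h3 : (eB m b' : LoopSp A B).2 = Finsupp.single m b' := rfl
          rw [h3, brkt_eB_eB, brkt_eB_eB, cnv_single_single, one_smul, dhat_single,
            T.skew b' b, T.psymm b' b, eB_add, eB_neg,
            show m + l = l + m from by ring]
          push_cast
          module

end Ideal

section Main
set_option linter.unusedSectionVars false
variable (T : OneTrunc A B)

def dhatL : (ℤ →₀ A) →ₗ[ℂ] LoopSp A B :=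
  { toFun := dhat T, map_add' := dhat_add T, map_smul' := dhat_smul T }

def brktL : LoopSp A B →ₗ[ℂ] LoopSp A B →ₗ[ℂ] LoopSp A B :=
  LinearMap.mk₂ ℂ (brkt T) (brkt_add_left T) (brkt_smul_left T)
    (brkt_add_right T) (brkt_smul_right T)

abbrev SD : Submodule ℂ (LoopSp A B) := Submodule.span ℂ {z : LoopSp A B | ∃ f, z = dhat T f}

lemma mem_SD_iff (z : LoopSp A B) : z ∈ SD T ↔ ∃ f, z = dhat T f := by
  constructor
  · intro h
    have hsub : SD T ≤ LinearMap.range (dhatL T) :=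
      Submodule.span_le.mpr (by rintro z ⟨f, rfl⟩; exact ⟨f, rfl⟩)
    obtain ⟨f, hf⟩ := hsub h
    exact ⟨f, hf.symm⟩
  · rintro ⟨f, rfl⟩
    exact Submodule.subset_span ⟨f, rfl⟩

lemma memL (x : LoopSp A B) (hx : x ∈ SD T) (y : LoopSp A B) : brkt T x y ∈ SD T := by
  obtain ⟨f, rfl⟩ := (mem_SD_iff T x).1 hx
  rw [brkt_dhat_left]; exact (SD T).zero_mem

lemma memR (y x : LoopSp A B) (hx : x ∈ SD T) : brkt T y x ∈ SD T := by
  obtain ⟨f, rfl⟩ := (mem_SD_iff T x).1 hx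
  rw [brkt_dhat_right]; exact (mem_SD_iff T _).2 ⟨_, rfl⟩

lemma brkt_self_mem (x : LoopSp A B) : brkt T x x ∈ SD T := by
  have h2 : brkt T x x = ((2 : ℂ)⁻¹) • (brkt T x x + brkt T x x) := by
    rw [← two_smul ℂ (brkt T x x), smul_smul]; norm_num
  rw [h2, brkt_symm]
  exact (SD T).smul_mem _ ((mem_SD_iff T _).2 ⟨_, rfl⟩)

def gq (x : LoopSp A B) : (LoopSp A B ⧸ SD T) →ₗ[ℂ] (LoopSp A B ⧸ SD T) :=
  (SD T).liftQ ((SD T).mkQ.comp (brktL T x))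
    (fun z hz => by
      simp only [LinearMap.mem_ker, LinearMap.comp_apply, Submodule.mkQ_apply,
        Submodule.Quotient.mk_eq_zero]
      exact memR T x z hz)

lemma gq_mk (x z : LoopSp A B) :
    gq T x (Submodule.Quotient.mk z) = Submodule.Quotient.mk (brkt T x z) := by
  simp [gq, brktL, Submodule.liftQ_apply]

def Gq : LoopSp A B →ₗ[ℂ] (LoopSp A B ⧸ SD T) →ₗ[ℂ] (LoopSp A B ⧸ SD T) where
  toFun := gq T
  map_add' := fun x x' => by
    refine LinearMap.ext fun q => ?_
    obtain ⟨z, rfl⟩ := Submodule.Quotient.mk_surjective (SD T) q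
    simp only [gq_mk, LinearMap.add_apply, brkt_add_left, Submodule.Quotient.mk_add]
  map_smul' := fun c x => by
    refine LinearMap.ext fun q => ?_
    obtain ⟨z, rfl⟩ := Submodule.Quotient.mk_surjective (SD T) q
    simp only [gq_mk, RingHom.id_apply, LinearMap.smul_apply, brkt_smul_left,
      Submodule.Quotient.mk_smul]

def Fq : (LoopSp A B ⧸ SD T) →ₗ[ℂ] (LoopSp A B ⧸ SD T) →ₗ[ℂ] (LoopSp A B ⧸ SD T) :=
  (SD T).liftQ (Gq T)
    (fun z hz => by
      rw [LinearMap.mem_ker]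
      refine LinearMap.ext fun q => ?_
      obtain ⟨y, rfl⟩ := Submodule.Quotient.mk_surjective (SD T) q
      show Gq T z (Submodule.Quotient.mk y) = 0
      rw [show Gq T z = gq T z from rfl, gq_mk, Submodule.Quotient.mk_eq_zero]
      exact memL T z hz y)

lemma Fq_mk (x y : LoopSp A B) :
    Fq T (Submodule.Quotient.mk x) (Submodule.Quotient.mk y)
      = Submodule.Quotient.mk (brkt T x y) := by
  rw [Fq, Submodule.liftQ_apply, show Gq T x = gq T x from rfl, gq_mk]

end Main

/-- `∂̂L(A)` is a two-sided ideal of `(L(A⊕B), [·,·])`, and the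
bracket descends to a Lie algebra structure on the quotient `L(A⊕B)/∂̂L(A)`. -/
theorem stmt1 (T : OneTrunc A B) :
    (∀ x ∈ Submodule.span ℂ {z : LoopSp A B | ∃ f, z = dhat T f},
      ∀ y : LoopSp A B,
        brkt T x y ∈ Submodule.span ℂ {z : LoopSp A B | ∃ f, z = dhat T f} ∧
        brkt T y x ∈ Submodule.span ℂ {z : LoopSp A B | ∃ f, z = dhat T f}) ∧
    ∃ qbr : (LoopSp A B ⧸ Submodule.span ℂ {z : LoopSp A B | ∃ f, z = dhat T f}) →
            (LoopSp A B ⧸ Submodule.span ℂ {z : LoopSp A B | ∃ f, z = dhat T f}) →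
            (LoopSp A B ⧸ Submodule.span ℂ {z : LoopSp A B | ∃ f, z = dhat T f}),
      (∀ x y : LoopSp A B,
        qbr (Submodule.Quotient.mk x) (Submodule.Quotient.mk y)
          = Submodule.Quotient.mk (brkt T x y)) ∧
      (∀ x y z, qbr (x + y) z = qbr x z + qbr y z) ∧
      (∀ (c : ℂ) x y, qbr (c • x) y = c • qbr x y) ∧
      (∀ x y z, qbr x (y + z) = qbr x y + qbr x z) ∧
      (∀ (c : ℂ) x y, qbr x (c • y) = c • qbr x y) ∧
      (∀ x, qbr x x = 0) ∧
      (∀ x y z, qbr x (qbr y z) = qbr (qbr x y) z + qbr y (qbr x z)) := by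
  refine ⟨fun x hx y => ⟨memL T x hx y, memR T y x hx⟩,
    fun q r => Fq T q r, Fq_mk T, ?_, ?_, ?_, ?_, ?_, ?_⟩
  · intro x y z; dsimp only; rw [map_add, LinearMap.add_apply]
  · intro c x y; dsimp only; rw [map_smul, LinearMap.smul_apply]
  · intro x y z; dsimp only; rw [map_add]
  · intro c x y; dsimp only; rw [map_smul]
  · intro q
    dsimp only
    obtain ⟨x, rfl⟩ := Submodule.Quotient.mk_surjective (SD T) q
    rw [Fq_mk, Submodule.Quotient.mk_eq_zero]
    exact brkt_self_mem T x
  · intro q r s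
    dsimp only
    obtain ⟨x, rfl⟩ := Submodule.Quotient.mk_surjective (SD T) q
    obtain ⟨y, rfl⟩ := Submodule.Quotient.mk_surjective (SD T) r
    obtain ⟨z, rfl⟩ := Submodule.Quotient.mk_surjective (SD T) s
    rw [Fq_mk, Fq_mk, Fq_mk, Fq_mk, Fq_mk, Fq_mk, jacobi T x y z, Submodule.Quotient.mk_add]
end
end

section
/- Let A be a unital commutative associative ℂ-algebra and B an A-module (as a nonassociative algebra action). Suppose C = A ⊕ B carries a 1-truncated conformal algebra structure with aᵢa' = 0, u₀v = [u,v], u₁v = ⟨u,v⟩, u₀a = π(u)(a), a₀u = -π(u)(a) for a,a' ∈ A, u,v ∈ B, satisfying additionally: a(a'u) - (aa')u = (u₀a)∂a' + (u₀a')∂a; u₀(av) - a(u₀v) = (u₀a)v; u₀(aa') = a(u₀a') + (u₀a)a'; a₀(a'v) = a'(a₀v); (au)₁v = a(u₁v) - u₀(v₀a); and ∂(aa') = a∂a' + a'∂a. Then B is a vertex A-algebroid with these structures. Conversely, every vertex A-algebroid structure on B gives a 1-truncated conformal algebra structure on A ⊕ B satisfying these conditions. -/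
noncomputable section

/-- A vertex `A`-algebroid: `act a v = a*v`, `br` the Leibniz bracket,
`pi b a = π(b)(a)` the anchor, `pr u v = ⟨u,v⟩` the pairing, `d = ∂`. -/
structure VertexAlgebroid (A B : Type*) [CommRing A] [Algebra ℂ A]
    [AddCommGroup B] [Module ℂ B] where
  act : A →ₗ[ℂ] B →ₗ[ℂ] B
  act_one : ∀ v, act 1 v = v
  br : B →ₗ[ℂ] B →ₗ[ℂ] B
  leibniz : ∀ u v w, br u (br v w) = br (br u v) w + br v (br u w)
  pi : B →ₗ[ℂ] A →ₗ[ℂ] A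
  pi_der : ∀ v a a', pi v (a * a') = a * pi v a' + (pi v a) * a'
  pi_hom : ∀ u v a, pi (br u v) a = pi u (pi v a) - pi v (pi u a)
  pr : B →ₗ[ℂ] B →ₗ[ℂ] A
  pr_symm : ∀ u v, pr u v = pr v u
  d : A →ₗ[ℂ] B
  pi_d : ∀ a a', pi (d a) a' = 0
  id1 : ∀ a a' v, act a (act a' v) - act (a * a') v
          = act (pi v a) (d a') + act (pi v a') (d a)
  id2 : ∀ u a v, br u (act a v) = act (pi u a) v + act a (br u v)
  id3 : ∀ u v, br u v + br v u = d (pr u v)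
  id4 : ∀ a v a', pi (act a v) a' = a * pi v a'
  id5 : ∀ a u v, pr (act a u) v = a * pr u v - pi u (pi v a)
  id6 : ∀ v v1 v2, pi v (pr v1 v2) = pr (br v v1) v2 + pr v1 (br v v2)
  id7 : ∀ a a', d (a * a') = act a (d a') + act a' (d a)
  id8 : ∀ v a, br v (d a) = d (pi v a)
  id9 : ∀ v a, pr v (d a) = pi v a

/-- Proposition 2.3 of the paper: for a unital commutative
associative ℂ-algebra `A` and an `A`-module `B` (given by `act`, with
`1 * v = v`), a vertex `A`-algebroid structure on `B` (with action `act`)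
is equivalent to a 1-truncated conformal algebra structure on `A ⊕ B`
(given by `d`, `oa`, `ob`, `p`, where `u₀v = [u,v]`, `u₁v = ⟨u,v⟩`,
`u₀a = π(u)(a)`, `a₀u = -u₀a`, `aᵢa' = 0`) satisfying the six extra
compatibility conditions. -/
theorem stmt3 {A B : Type*} [CommRing A] [Algebra ℂ A]
    [AddCommGroup B] [Module ℂ B]
    (act : A →ₗ[ℂ] B →ₗ[ℂ] B) (hone : ∀ v, act 1 v = v)
    (d : A →ₗ[ℂ] B) (oa : B →ₗ[ℂ] A →ₗ[ℂ] A)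
    (ob : B →ₗ[ℂ] B →ₗ[ℂ] B) (p : B →ₗ[ℂ] B →ₗ[ℂ] A) :
    ((∃ T : OneTrunc A B, T.d = d ∧ T.oa = oa ∧ T.ob = ob ∧ T.p = p) ∧
      (∀ (a a' : A) (u : B),
        act a (act a' u) - act (a * a') u
          = act (oa u a) (d a') + act (oa u a') (d a)) ∧
      (∀ (u : B) (a : A) (v : B),
        ob u (act a v) - act a (ob u v) = act (oa u a) v) ∧
      (∀ (u : B) (a a' : A), oa u (a * a') = a * oa u a' + (oa u a) * a') ∧
      (∀ (a a' : A) (v : B), oa (act a' v) a = a' * oa v a) ∧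
      (∀ (a : A) (u v : B), p (act a u) v = a * p u v - oa u (oa v a)) ∧
      (∀ a a' : A, d (a * a') = act a (d a') + act a' (d a)))
    ↔ ∃ V : VertexAlgebroid A B,
        V.act = act ∧ V.br = ob ∧ V.pi = oa ∧ V.pr = p ∧ V.d = d := by
  constructor
  · rintro ⟨⟨T, hd, hoa, hob, hp⟩, h1, h2, h3, h4, h5, h6⟩
    subst hd; subst hoa; subst hob; subst hp
    refine ⟨⟨act, hone, T.ob,
      fun u v w => by rw [T.assoc_b]; abel,
      T.oa, h3,
      fun u v a => by linear_combination -T.assoc_a u v a,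
      T.p, T.psymm, T.d, T.da_oa,
      h1,
      fun u a v => by
        have h := h2 u a v; rw [sub_eq_iff_eq_add] at h; rw [h],
      fun u v => by rw [T.skew u v, T.psymm v u]; abel,
      fun a v a' => h4 a' a v,
      h5,
      fun v v1 v2 => by rw [T.assoc_p]; ring,
      h6,
      fun v a => (T.d_oa v a).symm,
      fun v a => by rw [T.psymm, T.da_p]⟩, rfl, rfl, rfl, rfl, rfl⟩
  · rintro ⟨V, ha, hb, hpi, hpr, hd⟩
    subst ha; subst hb; subst hpi; subst hpr; subst hd
    refine ⟨⟨⟨V.d, V.pi, V.br, V.pr,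
      fun a v => ?_,
      V.pi_d,
      fun a v => by rw [V.pr_symm, V.id9],
      fun u a => (V.id8 u a).symm,
      fun u v => by
        have h := V.id3 u v
        rw [V.pr_symm v u, ← h]; abel,
      V.pr_symm,
      fun u v w => by rw [V.leibniz]; abel,
      fun u v w => by rw [V.id6]; ring,
      fun u v c => by linear_combination -V.pi_hom u v c⟩,
      rfl, rfl, rfl, rfl⟩, V.id1,
      fun u a v => by rw [sub_eq_iff_eq_add, V.id2 u a v],
      V.pi_der, fun a a' v => V.id4 a' v a, V.id5, V.id7⟩
    have h3 := V.id3 (V.d a) v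
    rw [V.pr_symm, V.id9, V.id8 v a] at h3
    rwa [add_eq_right] at h3
end
end

section
/- Let V be a vertex algebra, g an automorphism of V of finite order T, M a g-twisted V-module, and S ⊆ V any subset. Then the annihilator Ann_M(S) = {w ∈ M : Y_M(v,x)w = 0 for all v ∈ S} is a g-twisted V-submodule of M, and Ann_M(S) = Ann_M(⟨S⟩), where ⟨S⟩ is the ideal of V generated by S. -/
noncomputable section

/-- Generalized binomial coefficient `C(q, n)` for `q ∈ ℚ`. -/
def qchoose (q : ℚ) (n : ℕ) : ℚ :=
  (∏ i ∈ Finset.range n, (q - i)) / (n.factorial : ℚ)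

/-- A vertex algebra over ℂ: `Y u n v = uₙv`, with vacuum `vac = 𝟙`, the
truncation, vacuum and creation properties, and the Borcherds (Jacobi)
identity in component form. -/
structure VertexAlgebra (V : Type*) [AddCommGroup V] [Module ℂ V] where
  Y : V →ₗ[ℂ] ℤ → V →ₗ[ℂ] V
  vac : V
  trunc : ∀ u v, ∃ N : ℤ, ∀ n ≥ N, Y u n v = 0
  vac_act : ∀ v : V, Y vac (-1) v = v
  vac_act' : ∀ (v : V) (n : ℤ), n ≠ -1 → Y vac n v = 0
  creation : ∀ u : V, Y u (-1) vac = u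
  creation' : ∀ (u : V) (n : ℤ), 0 ≤ n → Y u n vac = 0
  borcherds : ∀ (u v w : V) (p q r : ℤ),
    ∑ᶠ i : ℕ, ((qchoose (p : ℚ) i : ℚ) : ℂ) • Y (Y u (r + i) v) (p + q - i) w
      = ∑ᶠ i : ℕ, ((-1 : ℂ) ^ i * ((qchoose (r : ℚ) i : ℚ) : ℂ)) •
          (Y u (p + r - i) (Y v (q + i) w)
            - ((-1 : ℂ) ^ r) • Y v (q + r - i) (Y u (p + i) w))

/-- A `g`-twisted module for a vertex algebra `V` with automorphism `g` of
order `T`. The operator `act v k` represents `v_{k/T}` (indices are in units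
of `1/T`). -/
structure TwistedModule {V : Type*} [AddCommGroup V] [Module ℂ V]
    (VA : VertexAlgebra V) (T : ℕ) (g : V ≃ₗ[ℂ] V)
    (W : Type*) [AddCommGroup W] [Module ℂ W] where
  act : V →ₗ[ℂ] ℤ → W →ₗ[ℂ] W
  trunc : ∀ (v : V) (w : W), ∃ N : ℤ, ∀ k ≥ N, act v k w = 0
  vac_act : ∀ w : W, act VA.vac (-(T : ℤ)) w = w
  vac_act' : ∀ (w : W) (k : ℤ), k ≠ -(T : ℤ) → act VA.vac k w = 0
  eigen : ∀ (u : V) (r : ℕ), r < T →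
    g u = Complex.exp (2 * Real.pi * Complex.I * r / T) • u →
    ∀ k : ℤ, ¬ (k ≡ (r : ℤ) [ZMOD (T : ℤ)]) → act u k = 0
  jacobi : ∀ (u : V) (r : ℕ), r < T →
    g u = Complex.exp (2 * Real.pi * Complex.I * r / T) • u →
    ∀ (v : V) (p s t : ℤ), s ≡ (r : ℤ) [ZMOD (T : ℤ)] → ∀ w : W,
    ∑ᶠ m : ℕ, ((qchoose ((s : ℚ) / T) m : ℚ) : ℂ) •
        act (VA.Y u (p + m) v) (s + t - m * T) w
      = ∑ᶠ m : ℕ, ((-1 : ℂ) ^ m * ((qchoose (p : ℚ) m : ℚ) : ℂ)) •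
          (act u (p * T + s - m * T) (act v (t + m * T) w)
            - ((-1 : ℂ) ^ p) • act v (p * T + t - m * T) (act u (s + m * T) w))


lemma qchoose_zero (q : ℚ) : qchoose q 0 = 1 := by
  simp [qchoose]

lemma qchoose_nat_of_lt {p m : ℕ} (h : p < m) : qchoose (p : ℚ) m = 0 := by
  unfold qchoose
  rw [Finset.prod_eq_zero (Finset.mem_range.mpr h) (by simp)]
  simp

lemma qchoose_pascal (q : ℚ) (m : ℕ) :
    qchoose q (m + 1) = qchoose (q - 1) (m + 1) + qchoose (q - 1) m := by
  have hD : (∏ i ∈ Finset.range (m+1), (q - i)) = q * ∏ i ∈ Finset.range m, ((q - 1) - i) := by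
    rw [Finset.prod_range_succ' (fun i => (q - i))]
    simp only [Nat.cast_add, Nat.cast_one, Nat.cast_zero, sub_zero]
    rw [mul_comm]
    congr 1
    apply Finset.prod_congr rfl
    intro i _
    push_cast
    ring
  have hD2 : (∏ i ∈ Finset.range (m+1), ((q-1) - i)) = (∏ i ∈ Finset.range m, ((q-1) - i)) * ((q-1) - m) := by
    rw [Finset.prod_range_succ]
  have hfac : ((m+1).factorial : ℚ) = (m+1) * (m.factorial : ℚ) := by
    rw [Nat.factorial_succ]; push_cast; ring
  have h1 : (m.factorial : ℚ) ≠ 0 := Nat.cast_ne_zero.mpr (Nat.factorial_ne_zero m)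
  have h2 : ((m:ℚ)+1) ≠ 0 := by positivity
  unfold qchoose
  rw [hD, hD2, hfac]
  field_simp
  ring

lemma descent {W : Type*} [AddCommGroup W] [Module ℂ W] :
    ∀ (p : ℕ) (f : ℤ → W), (∃ B : ℤ, ∀ a ≥ B, f a = 0) →
    (∀ a : ℤ, ∑ m ∈ Finset.range (p+1),
        ((-1:ℂ)^m * ((qchoose (p:ℚ) m : ℚ):ℂ)) • f (a + m) = 0) →
    ∀ a, f a = 0 := by
  intro p
  induction p with
  | zero =>
    intro f _ heq a
    have := heq a
    simpa [qchoose_zero] using this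
  | succ p ih =>
    intro f hbd heq
    set c : ℕ → ℂ := fun m => (-1:ℂ)^m * ((qchoose (p:ℚ) m : ℚ):ℂ) with hc
    set g : ℤ → W := fun a => f a - f (a + 1) with hg
    have hgbd : ∃ B : ℤ, ∀ a ≥ B, g a = 0 := by
      obtain ⟨B, hB⟩ := hbd
      exact ⟨B, fun a ha => by simp [hg, hB a ha, hB (a+1) (by omega)]⟩
    have hgeq : ∀ a : ℤ, ∑ m ∈ Finset.range (p+1), c m • g (a + m) = 0 := by
      intro a
      set F : ℕ → W := fun m => f (a + m) with hF
      have hFsucc : ∀ m : ℕ, f (a + (m:ℤ) + 1) = F (m+1) := by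
        intro m; rw [hF]; simp only []; congr 1; push_cast; ring
      have h0 : ∑ m ∈ Finset.range (p+2),
          ((-1:ℂ)^m * ((qchoose ((p+1:ℕ):ℚ) m : ℚ):ℂ)) • F m = 0 := heq a
      rw [Finset.sum_range_succ'
        (fun m => ((-1:ℂ)^m * ((qchoose ((p+1:ℕ):ℚ) m : ℚ):ℂ)) • F m) (p+1)] at h0
      have hpas : ∀ m : ℕ, ((-1:ℂ)^(m+1) * ((qchoose ((p+1:ℕ):ℚ) (m+1) : ℚ):ℂ))
          = c (m+1) - c m := by
        intro m
        have hcast : ((p+1:ℕ):ℚ) = (p:ℚ)+1 := by push_cast; ring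
        have h1 : qchoose ((p+1:ℕ):ℚ) (m+1) = qchoose (p:ℚ) (m+1) + qchoose (p:ℚ) m := by
          rw [hcast, qchoose_pascal ((p:ℚ)+1) m]
          norm_num
        rw [h1, hc]
        push_cast
        ring
      have hc0 : ((-1:ℂ)^(0:ℕ) * ((qchoose ((p+1:ℕ):ℚ) 0 : ℚ):ℂ)) = c 0 := by
        rw [hc]; simp [qchoose_zero]
      simp only [hpas, hc0] at h0
      -- h0 : ∑ (c(m+1) - c m) • F (m+1) + c 0 • F 0 = 0
      have hfirst : ∑ m ∈ Finset.range (p+1), (c (m+1) - c m) • F (m+1)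
          = (∑ m ∈ Finset.range (p+1), c (m+1) • F (m+1))
            - ∑ m ∈ Finset.range (p+1), c m • F (m+1) := by
        rw [← Finset.sum_sub_distrib]
        exact Finset.sum_congr rfl (fun m _ => sub_smul _ _ _)
      have hshift : ∑ m ∈ Finset.range (p+1), c (m+1) • F (m+1)
          = (∑ m ∈ Finset.range (p+1), c m • F m) - c 0 • F 0 := by
        have h2 : ∑ m ∈ Finset.range (p+2), c m • F m
            = (∑ m ∈ Finset.range (p+1), c (m+1) • F (m+1)) + c 0 • F 0 :=
          Finset.sum_range_succ' (fun m => c m • F m) (p+1)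
        have h3 : ∑ m ∈ Finset.range (p+2), c m • F m
            = ∑ m ∈ Finset.range (p+1), c m • F m := by
          rw [Finset.sum_range_succ]
          have : c (p+1) = 0 := by
            rw [hc]; simp [qchoose_nat_of_lt (Nat.lt_succ_self p)]
          rw [this, zero_smul, add_zero]
        rw [← h3, h2]
        abel
      rw [hfirst, hshift] at h0
      have hgoal : ∑ m ∈ Finset.range (p+1), c m • g (a + m)
          = (∑ m ∈ Finset.range (p+1), c m • F m)
            - ∑ m ∈ Finset.range (p+1), c m • F (m+1) := by
        rw [← Finset.sum_sub_distrib]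
        apply Finset.sum_congr rfl
        intro m _
        rw [hg]
        simp only []
        rw [smul_sub, hFsucc m]
      rw [hgoal, ← h0]
      abel
    have hgzero := ih g hgbd hgeq
    have hstep : ∀ a : ℤ, f a = f (a + 1) := by
      intro a
      have := hgzero a
      rw [hg] at this
      exact sub_eq_zero.mp this
    obtain ⟨B, hB⟩ := hbd
    intro a
    have key : ∀ n : ℕ, f a = f (a + n) := by
      intro n
      induction n with
      | zero => simp
      | succ n ihn =>
        rw [ihn, hstep (a + n)]
        congr 1
        push_cast
        ring
    rcases le_or_gt B a with h | h
    · exact hB a h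
    · rw [key (B - a).toNat]
      apply hB
      omega


lemma decomp {V : Type*} [AddCommGroup V] [Module ℂ V] (T : ℕ) (hT : 0 < T)
    (g : V ≃ₗ[ℂ] V) (hord : ∀ v, (fun x => g x)^[T] v = v) (u : V) :
    ∃ c : ℕ → V, (∑ ρ ∈ Finset.range T, c ρ) = u ∧
      ∀ ρ : ℕ, g (c ρ) = Complex.exp (2 * Real.pi * Complex.I * ρ / T) • c ρ := by
  have hT0 : (T:ℂ) ≠ 0 := Nat.cast_ne_zero.mpr hT.ne'
  set ζ : ℂ := Complex.exp (2 * Real.pi * Complex.I / T) with hζ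
  have hζ0 : ζ ≠ 0 := Complex.exp_ne_zero _
  have hζT : ζ ^ T = 1 := by
    rw [hζ, ← Complex.exp_nat_mul]
    rw [show (T:ℂ) * (2 * Real.pi * Complex.I / T) = 2 * Real.pi * Complex.I by
      field_simp]
    exact Complex.exp_two_pi_mul_I
  have hζk : ∀ k : ℕ, 0 < k → k < T → ζ ^ k ≠ 1 := by
    intro k hk hkT h1
    rw [hζ, ← Complex.exp_nat_mul, Complex.exp_eq_one_iff] at h1
    obtain ⟨n, hn⟩ := h1
    have h2πI : (2:ℂ) * Real.pi * Complex.I ≠ 0 := by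
      simp [Real.pi_ne_zero, Complex.I_ne_zero, Complex.ofReal_ne_zero]
    have hn' : (k:ℂ) * (2 * Real.pi * Complex.I) = ((n:ℂ) * T) * (2 * Real.pi * Complex.I) := by
      field_simp at hn
      linear_combination (2 * Real.pi * Complex.I) * hn
    have hkc : (k:ℂ) = (n:ℂ) * T := mul_right_cancel₀ h2πI hn'
    have hkz : (k:ℤ) = n * T := by exact_mod_cast hkc
    have hdvd : (T:ℤ) ∣ (k:ℤ) := ⟨n, by linarith [hkz]⟩
    have := Int.le_of_dvd (by exact_mod_cast hk) hdvd
    omega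
  set ν : ℂ := ζ⁻¹ with hν
  have hνρT : ∀ ρ : ℕ, ν ^ (ρ * T) = 1 := by
    intro ρ
    rw [hν, inv_pow, mul_comm ρ T, pow_mul, hζT, one_pow, inv_one]
  set G : ℕ → V := fun k => (fun x => g x)^[k] u with hG
  have hGsucc : ∀ k : ℕ, g (G k) = G (k+1) := by
    intro k
    exact (Function.iterate_succ_apply' (fun x => g x) k u).symm
  have hGT : G T = u := hord u
  have hG0 : G 0 = u := rfl
  set c : ℕ → V := fun ρ => (T:ℂ)⁻¹ • ∑ k ∈ Finset.range T, ν ^ (ρ * k) • G k with hcdef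
  refine ⟨c, ?_, ?_⟩
  · -- sum over ρ equals u
    have : ∑ ρ ∈ Finset.range T, c ρ
        = (T:ℂ)⁻¹ • ∑ ρ ∈ Finset.range T, ∑ k ∈ Finset.range T, ν ^ (ρ * k) • G k := by
      rw [Finset.smul_sum]
    rw [this]
    have hswap : ∑ ρ ∈ Finset.range T, ∑ k ∈ Finset.range T, ν ^ (ρ * k) • G k
        = ∑ k ∈ Finset.range T, (∑ ρ ∈ Finset.range T, (ν ^ k) ^ ρ) • G k := by
      rw [Finset.sum_comm]
      apply Finset.sum_congr rfl
      intro k _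
      rw [Finset.sum_smul]
      apply Finset.sum_congr rfl
      intro ρ _
      rw [← pow_mul, mul_comm k ρ]
    rw [hswap]
    rw [Finset.sum_eq_single 0]
    · simp only [pow_zero, hG0]
      rw [Finset.sum_congr rfl (fun ρ _ => one_pow ρ), Finset.sum_const, Finset.card_range]
      simp [nsmul_eq_mul, inv_mul_cancel₀ hT0]
      rw [smul_smul, inv_mul_cancel₀ hT0, one_smul]
    · intro k hk hk0
      have hkT := Finset.mem_range.mp hk
      have hx1 : ν ^ k ≠ 1 := by
        rw [hν, inv_pow]
        intro h
        exact hζk k (Nat.pos_of_ne_zero hk0) hkT (inv_eq_one.mp h)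
      have hxT : (ν ^ k) ^ T = 1 := by
        rw [hν, inv_pow, inv_pow, ← pow_mul, mul_comm k T, pow_mul, hζT, one_pow, inv_one]
      rw [geom_sum_eq hx1, hxT]
      simp
    · intro h
      exact absurd (Finset.mem_range.mpr hT) h
  · -- eigenvector property
    intro ρ
    have hexp : Complex.exp (2 * Real.pi * Complex.I * ρ / T) = ζ ^ ρ := by
      rw [hζ, ← Complex.exp_nat_mul]
      congr 1
      ring
    rw [hexp]
    have hterm : ∀ k : ℕ, g (ν ^ (ρ * k) • G k) = ζ ^ ρ • (ν ^ (ρ * (k+1)) • G (k+1)) := by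
      intro k
      rw [map_smul, hGsucc k, smul_smul]
      congr 1
      rw [hν, inv_pow, inv_pow, show ρ * (k+1) = ρ * k + ρ by ring, pow_add, mul_inv]
      rw [← mul_assoc, mul_comm (ζ^ρ) ((ζ^(ρ*k))⁻¹), mul_assoc, mul_inv_cancel₀ (pow_ne_zero _ hζ0), mul_one]
    have hsumshift : ∑ k ∈ Finset.range T, ν ^ (ρ * (k+1)) • G (k+1)
        = ∑ k ∈ Finset.range T, ν ^ (ρ * k) • G k := by
      have h1 := Finset.sum_range_succ' (fun k => ν ^ (ρ * k) • G k) T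
      have h2 := Finset.sum_range_succ (fun k => ν ^ (ρ * k) • G k) T
      have hfT : ν ^ (ρ * T) • G T = ν ^ (ρ * 0) • G 0 := by
        rw [hνρT, hGT, hG0]
        simp
      rw [h2, hfT] at h1
      exact (add_right_cancel h1.symm)
    show g ((T:ℂ)⁻¹ • ∑ k ∈ Finset.range T, ν ^ (ρ * k) • G k)
        = ζ ^ ρ • ((T:ℂ)⁻¹ • ∑ k ∈ Finset.range T, ν ^ (ρ * k) • G k)
    rw [map_smul, map_sum]
    rw [Finset.sum_congr rfl (fun k _ => hterm k), ← Finset.smul_sum, hsumshift]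
    rw [smul_comm]

section core
variable {V W : Type*} [AddCommGroup V] [Module ℂ V] [AddCommGroup W] [Module ℂ W]
variable (VA : VertexAlgebra V) (T : ℕ) (g : V ≃ₗ[ℂ] V)
variable (M : TwistedModule VA T g W)

lemma act_zero (k : ℤ) (w : W) : M.act (0:V) k w = 0 := by
  rw [map_zero]
  rfl

lemma key_products (hT : 0 < T) (u v : V) (w : W) (r : ℕ) (hr : r < T)
    (heig : g u = Complex.exp (2 * Real.pi * Complex.I * r / T) • u)
    (hw : ∀ k : ℤ, M.act u k w = 0) (j k : ℤ) :
    M.act u j (M.act v k w) = 0 := by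
  by_cases hjr : j ≡ (r:ℤ) [ZMOD (T:ℤ)]
  · obtain ⟨N₀, hN₀⟩ := VA.trunc u v
    set p : ℕ := (max N₀ 0).toNat with hp
    have hpN : N₀ ≤ (p:ℤ) := by omega
    obtain ⟨Nv, hNv⟩ := M.trunc v w
    set f : ℤ → W := fun a => M.act u (j - a*T) (M.act v (k + a*T) w) with hf
    have hfbd : ∃ B, ∀ a ≥ B, f a = 0 := by
      refine ⟨max (Nv - k) 0, fun a ha => ?_⟩
      have haT : a ≤ a * T := le_mul_of_one_le_right (by omega) (by exact_mod_cast hT)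
      have h1 : k + a*T ≥ Nv := by omega
      rw [hf]
      simp only [hNv _ h1, map_zero]
    have heqs : ∀ a : ℤ, ∑ m ∈ Finset.range (p+1),
        ((-1:ℂ)^m * ((qchoose (p:ℚ) m : ℚ):ℂ)) • f (a + m) = 0 := by
      intro a
      set s : ℤ := j - a*T - (p:ℤ)*T with hsdef
      set t : ℤ := k + a*T with htdef
      have hs : s ≡ (r:ℤ) [ZMOD (T:ℤ)] := by
        rw [Int.modEq_iff_dvd] at hjr ⊢
        obtain ⟨c0, hc0⟩ := hjr
        exact ⟨c0 + a + p, by rw [hsdef]; linear_combination hc0⟩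
      have hj := M.jacobi u r hr heig v (p:ℤ) s t hs w
      have hL : ∑ᶠ m : ℕ, ((qchoose ((s:ℚ) / T) m : ℚ) : ℂ) •
          M.act (VA.Y u ((p:ℤ) + m) v) (s + t - m * T) w = 0 := by
        apply finsum_eq_zero_of_forall_eq_zero
        intro m
        rw [hN₀ ((p:ℤ) + m) (by omega), act_zero, smul_zero]
      rw [hL] at hj
      have hR : ∀ m : ℕ, ((-1 : ℂ) ^ m * ((qchoose (((p:ℤ)) : ℚ) m : ℚ) : ℂ)) •
          (M.act u ((p:ℤ) * T + s - m * T) (M.act v (t + m * T) w)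
            - ((-1 : ℂ) ^ ((p:ℤ))) • M.act v ((p:ℤ) * T + t - m * T)
               (M.act u (s + m * T) w))
          = ((-1:ℂ)^m * ((qchoose (p:ℚ) m : ℚ):ℂ)) • f (a + m) := by
        intro m
        rw [hw (s + m * T), map_zero, smul_zero, sub_zero]
        have hcast : (((p:ℤ)) : ℚ) = (p:ℚ) := by push_cast; ring
        rw [hcast, hf]
        have hi1 : (p:ℤ) * T + s - (m:ℤ) * T = j - (a + m)*T := by rw [hsdef]; ring
        have hi2 : t + (m:ℤ) * T = k + (a + m)*T := by rw [htdef]; ring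
        rw [hi1, hi2]
      rw [finsum_congr hR] at hj
      rw [finsum_eq_finset_sum_of_support_subset _ (s := Finset.range (p+1)) ?hsupp] at hj
      · exact hj.symm
      · intro m hm
        simp only [Function.mem_support, ne_eq] at hm
        by_contra hmem
        apply hm
        have hmp : p < m := by
          simp only [Finset.coe_range, Set.mem_Iio] at hmem
          omega
        rw [qchoose_nat_of_lt hmp]
        simp
    have := descent p f hfbd heqs 0
    rw [hf] at this
    simpa using this
  · rw [M.eigen u r hr heig j hjr]
    simp
end core

section core2
variable {V W : Type*} [AddCommGroup V] [Module ℂ V] [AddCommGroup W] [Module ℂ W]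
variable {VA : VertexAlgebra V} {T : ℕ} {g : V ≃ₗ[ℂ] V}
variable (M : TwistedModule VA T g W)

lemma key_modes (u v : V) (w : W) (r : ℕ) (hr : r < T)
    (heig : g u = Complex.exp (2 * Real.pi * Complex.I * r / T) • u)
    (hA : ∀ j k : ℤ, M.act u j (M.act v k w) = 0)
    (hB : ∀ j k : ℤ, M.act v j (M.act u k w) = 0) :
    ∀ n K : ℤ, M.act (VA.Y u n v) K w = 0 := by
  obtain ⟨N₀, hN₀⟩ := VA.trunc u v
  suffices H : ∀ d : ℕ, ∀ n : ℤ, N₀ ≤ n + d → ∀ K, M.act (VA.Y u n v) K w = 0 by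
    intro n K
    exact H (N₀ - n).toNat n (by omega) K
  intro d
  induction d with
  | zero =>
    intro n hn K
    rw [hN₀ n (by omega), act_zero]
  | succ d ih =>
    intro n hn K
    by_cases hcase : N₀ ≤ n
    · rw [hN₀ n hcase, act_zero]
    · have hs : (r:ℤ) ≡ (r:ℤ) [ZMOD (T:ℤ)] := Int.ModEq.refl _
      have hj := M.jacobi u r hr heig v n (r:ℤ) (K - r) hs w
      have hR : ∑ᶠ m : ℕ, ((-1 : ℂ) ^ m * ((qchoose ((n:ℤ) : ℚ) m : ℚ) : ℂ)) •
          (M.act u (n * T + (r:ℤ) - m * T) (M.act v ((K - r) + m * T) w)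
            - ((-1 : ℂ) ^ (n:ℤ)) • M.act v (n * T + (K - r) - m * T)
              (M.act u ((r:ℤ) + m * T) w)) = 0 := by
        apply finsum_eq_zero_of_forall_eq_zero
        intro m
        rw [hA (n * T + (r:ℤ) - m * T) ((K - r) + m * T),
          hB (n * T + (K - r) - m * T) ((r:ℤ) + m * T)]
        simp
      rw [hR] at hj
      rw [finsum_eq_single _ 0 ?htail] at hj
      · have h0 : ((n:ℤ) + (0:ℕ)) = n := by push_cast; ring
        have h1 : ((r:ℤ) + (K - r) - (0:ℕ) * T) = K := by push_cast; ring
        rw [h0, h1, qchoose_zero] at hj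
        simpa using hj
      · intro m hm
        have hmn : N₀ ≤ (n + m) + d := by omega
        rw [ih (n + m) hmn, smul_zero]
end core2

section core3
variable {V W : Type*} [AddCommGroup V] [Module ℂ V] [AddCommGroup W] [Module ℂ W]
variable {VA : VertexAlgebra V} {T : ℕ} {g : V ≃ₗ[ℂ] V}
variable (M : TwistedModule VA T g W)

lemma act_sum {ι : Type*} (s : Finset ι) (c : ι → V) (k : ℤ) (w : W) :
    M.act (∑ i ∈ s, c i) k w = ∑ i ∈ s, M.act (c i) k w := by
  rw [map_sum]
  simp [Finset.sum_apply, LinearMap.sum_apply]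

lemma Y_sum {ι : Type*} (s : Finset ι) (c : ι → V) (n : ℤ) (v : V) :
    VA.Y (∑ i ∈ s, c i) n v = ∑ i ∈ s, VA.Y (c i) n v := by
  rw [map_sum]
  simp [Finset.sum_apply, LinearMap.sum_apply]

lemma residue_unique (hT : 0 < T) {ρ ρ' : ℕ} (hρ : ρ < T) (hρ' : ρ' < T) {k : ℤ}
    (h1 : k ≡ (ρ:ℤ) [ZMOD (T:ℤ)]) (h2 : k ≡ (ρ':ℤ) [ZMOD (T:ℤ)]) : ρ = ρ' := by
  have h3 : (ρ:ℤ) ≡ (ρ':ℤ) [ZMOD (T:ℤ)] := h1.symm.trans h2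
  have h4 : (ρ:ℤ) % T = (ρ':ℤ) % T := h3
  rw [Int.emod_eq_of_lt (by positivity) (by exact_mod_cast hρ),
    Int.emod_eq_of_lt (by positivity) (by exact_mod_cast hρ')] at h4
  exact_mod_cast h4

lemma comp_kill (hT : 0 < T) (u : V) (w : W) (c : ℕ → V)
    (hsum : (∑ ρ ∈ Finset.range T, c ρ) = u)
    (heig : ∀ ρ : ℕ, g (c ρ) = Complex.exp (2 * Real.pi * Complex.I * ρ / T) • c ρ)
    (hw : ∀ k : ℤ, M.act u k w = 0) :
    ∀ ρ < T, ∀ k : ℤ, M.act (c ρ) k w = 0 := by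
  intro ρ hρ k
  by_cases hk : k ≡ (ρ:ℤ) [ZMOD (T:ℤ)]
  · have hexp : M.act u k w = ∑ ρ' ∈ Finset.range T, M.act (c ρ') k w := by
      rw [← hsum, act_sum]
    have hz : ∑ ρ' ∈ Finset.range T, M.act (c ρ') k w = M.act (c ρ) k w := by
      apply Finset.sum_eq_single_of_mem ρ (Finset.mem_range.mpr hρ)
      intro ρ' hρ'mem hne
      have hρ'T := Finset.mem_range.mp hρ'mem
      have hk' : ¬ (k ≡ (ρ':ℤ) [ZMOD (T:ℤ)]) := by
        intro h
        exact hne (residue_unique hT hρ'T hρ h hk)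
      rw [M.eigen (c ρ') ρ' hρ'T (heig ρ') k hk']
      simp
    rw [← hz, ← hexp]
    exact hw k
  · rw [M.eigen (c ρ) ρ hρ (heig ρ) k hk]
    simp
end core3

section core4
variable {V W : Type*} [AddCommGroup V] [Module ℂ V] [AddCommGroup W] [Module ℂ W]
variable {VA : VertexAlgebra V} {T : ℕ} {g : V ≃ₗ[ℂ] V}
variable (M : TwistedModule VA T g W)

/-- If `u` kills `w`, it kills everything in the submodule generated by `w`. -/
lemma gen_prod (hT : 0 < T) (hord : ∀ v, (fun x => g x)^[T] v = v) (u : V) (w : W) (hw : ∀ k : ℤ, M.act u k w = 0) (v : V) (j k : ℤ) :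
    M.act u j (M.act v k w) = 0 := by
  obtain ⟨c, hsum, heig⟩ := decomp T hT g hord u
  have hkill := comp_kill M hT u w c hsum heig hw
  rw [← hsum, act_sum]
  apply Finset.sum_eq_zero
  intro ρ hρ
  exact key_products VA T g M hT (c ρ) v w ρ (Finset.mem_range.mp hρ) (heig ρ)
    (hkill ρ (Finset.mem_range.mp hρ)) j k

/-- Left ideal modes kill `w`. -/
lemma gen_left (hT : 0 < T) (hord : ∀ v, (fun x => g x)^[T] v = v) (x : V) (w : W) (hx : ∀ k : ℤ, M.act x k w = 0) (v : V) (n K : ℤ) :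
    M.act (VA.Y x n v) K w = 0 := by
  obtain ⟨c, hsum, heig⟩ := decomp T hT g hord x
  have hkill := comp_kill M hT x w c hsum heig hx
  rw [← hsum, Y_sum, act_sum]
  apply Finset.sum_eq_zero
  intro ρ hρ
  have hρT := Finset.mem_range.mp hρ
  refine key_modes M (c ρ) v w ρ hρT (heig ρ) ?_ ?_ n K
  · exact key_products VA T g M hT (c ρ) v w ρ hρT (heig ρ) (hkill ρ hρT)
  · intro j k
    rw [hkill ρ hρT k, map_zero]

/-- Right ideal modes kill `w`. -/
lemma gen_right (hT : 0 < T) (hord : ∀ v, (fun x => g x)^[T] v = v) (x : V) (w : W) (hx : ∀ k : ℤ, M.act x k w = 0) (u : V) (n K : ℤ) :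
    M.act (VA.Y u n x) K w = 0 := by
  obtain ⟨c, hsum, heig⟩ := decomp T hT g hord u
  rw [← hsum, Y_sum, act_sum]
  apply Finset.sum_eq_zero
  intro ρ hρ
  have hρT := Finset.mem_range.mp hρ
  refine key_modes M (c ρ) x w ρ hρT (heig ρ) ?_ ?_ n K
  · intro j k
    rw [hx k, map_zero]
  · intro j k
    exact gen_prod M hT hord x w hx (c ρ) j k
end core4


/-- Proposition 3.5: for any subset `S` of `V`, the annihilator
`Ann_M(S) = {w | Y_M(v,x)w = 0 ∀ v ∈ S}` is a `g`-twisted `V`-submodule of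
`M`, and `Ann_M(S) = Ann_M(⟨S⟩)` where `⟨S⟩` is the two-sided ideal of `V`
generated by `S`. -/
theorem stmt11 {V W : Type*} [AddCommGroup V] [Module ℂ V]
    [AddCommGroup W] [Module ℂ W]
    (VA : VertexAlgebra V) (T : ℕ) (hT : 0 < T) (g : V ≃ₗ[ℂ] V)
    (hvac : g VA.vac = VA.vac)
    (hY : ∀ (u : V) (n : ℤ) (v : V), g (VA.Y u n v) = VA.Y (g u) n (g v))
    (hord : ∀ v, (fun x => g x)^[T] v = v)
    (M : TwistedModule VA T g W) (S : Set V) :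
    (∃ N : Submodule ℂ W,
      (N : Set W) = {w : W | ∀ v ∈ S, ∀ k : ℤ, M.act v k w = 0} ∧
      (∀ (v : V) (k : ℤ), ∀ w ∈ N, M.act v k w ∈ N)) ∧
    {w : W | ∀ v ∈ S, ∀ k : ℤ, M.act v k w = 0}
      = {w : W | ∀ v ∈
          ⋂₀ {I : Set V | S ⊆ I ∧ (∃ p : Submodule ℂ V, (p : Set V) = I) ∧
            ∀ x ∈ I, ∀ (u : V) (n : ℤ), VA.Y u n x ∈ I ∧ VA.Y x n u ∈ I},
          ∀ k : ℤ, M.act v k w = 0} := by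
  constructor
  · refine ⟨⨅ (v : V) (_ : v ∈ S) (k : ℤ), LinearMap.ker (M.act v k), ?_, ?_⟩
    · ext w
      simp [Submodule.mem_iInf, LinearMap.mem_ker]
    · intro v k w hw
      simp only [Submodule.mem_iInf, LinearMap.mem_ker] at hw ⊢
      intro u hu j
      exact gen_prod M hT hord u w (fun k' => hw u hu k') v j k
  · ext w
    simp only [Set.mem_setOf_eq]
    constructor
    · intro hw v hv k
      set J : Set V := {x | ∀ k : ℤ, M.act x k w = 0} with hJ
      have hφ : ∀ k : ℤ, ∃ φ : V →ₗ[ℂ] W, ∀ x : V, φ x = M.act x k w := by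
        intro k'
        refine ⟨⟨⟨fun x => M.act x k' w, ?_⟩, ?_⟩, fun x => rfl⟩
        · intro x y; simp [map_add]
        · intro a x; simp [map_smul]
      choose φ hφeq using hφ
      have hJsub : ∃ p : Submodule ℂ V, (p : Set V) = J := by
        refine ⟨⨅ k : ℤ, LinearMap.ker (φ k), ?_⟩
        ext x
        simp [Submodule.mem_iInf, LinearMap.mem_ker, hφeq, hJ]
      have hvJ : v ∈ J := by
        apply hv J
        refine ⟨fun u hu k' => hw u hu k', hJsub, ?_⟩
        intro x hx u n
        exact ⟨fun K => gen_right M hT hord x w hx u n K,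
          fun K => gen_left M hT hord x w hx u n K⟩
      exact hvJ k
    · intro hw v hv k
      exact hw v (fun I hI => hI.1 hv) k
end
end

section
/- Let M be a g-twisted V-module for a vertex algebra V with automorphism g of finite order T. Then Y_M(𝒟v, x) = (d/dx)Y_M(v, x) for all v ∈ V, where 𝒟v = v_{-2}𝟙. -/
noncomputable section

lemma qchoose_one (q : ℚ) : qchoose q 1 = q := by simp [qchoose]

/-- Key lemma: the derivative identity in components, for eigenvectors of `g`. -/
lemma key_eigen {V W : Type*} [AddCommGroup V] [Module ℂ V]
    [AddCommGroup W] [Module ℂ W]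
    (VA : VertexAlgebra V) (T : ℕ) (hT : 0 < T) (g : V ≃ₗ[ℂ] V)
    (hvac : g VA.vac = VA.vac)
    (hY : ∀ (u : V) (n : ℤ) (v : V), g (VA.Y u n v) = VA.Y (g u) n (g v))
    (M : TwistedModule VA T g W)
    (u : V) (r : ℕ) (hr : r < T)
    (hu : g u = Complex.exp (2 * Real.pi * Complex.I * r / T) • u)
    (k : ℤ) :
    M.act (VA.Y u (-2) VA.vac) k
      = (-(((k : ℚ) / T : ℚ) : ℂ)) • M.act u (k - T) := by
  have hTz : (T : ℤ) ≠ 0 := by exact_mod_cast hT.ne'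
  have hDu : g (VA.Y u (-2) VA.vac)
      = Complex.exp (2 * Real.pi * Complex.I * r / T) • VA.Y u (-2) VA.vac := by
    rw [hY, hvac, hu, map_smul]
    simp
  by_cases hk : k ≡ (r : ℤ) [ZMOD (T : ℤ)]
  · -- congruent case: twisted Jacobi identity with p = -2, s = k - T, t = T
    set s : ℤ := k - T with hs
    have hscong : s ≡ (r : ℤ) [ZMOD (T : ℤ)] := by
      show s % (T : ℤ) = (r : ℤ) % (T : ℤ)
      rw [hs, Int.sub_emod_right]
      exact hk
    ext w
    simp only [LinearMap.smul_apply]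
    have E := M.jacobi u r hr hu VA.vac (-2) s T hscong w
    have hL : (∑ᶠ m : ℕ, ((qchoose ((s : ℚ) / T) m : ℚ) : ℂ) •
          M.act (VA.Y u (-2 + m) VA.vac) (s + T - m * T) w)
        = M.act (VA.Y u (-2) VA.vac) k w
          + (((s : ℚ) / T : ℚ) : ℂ) • M.act u s w := by
      refine (finsum_eq_sum_of_support_subset _
        (s := ({0, 1} : Finset ℕ)) ?_).trans ?_
      · intro m hm
        simp only [Function.mem_support, ne_eq] at hm
        by_contra hmem
        simp only [Finset.coe_insert, Finset.coe_singleton, Set.mem_insert_iff,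
          Set.mem_singleton_iff] at hmem
        push_neg at hmem
        have h2 : (0 : ℤ) ≤ -2 + m := by omega
        rw [VA.creation' u _ h2] at hm
        simp at hm
      · rw [Finset.sum_pair (by norm_num : (0 : ℕ) ≠ 1)]
        have hk' : s + (T : ℤ) = k := by omega
        norm_num [qchoose_zero, qchoose_one, VA.creation]
        rw [hk']
    have hR : (∑ᶠ m : ℕ, ((-1 : ℂ) ^ m * ((qchoose ((-2 : ℤ) : ℚ) m : ℚ) : ℂ)) •
          (M.act u ((-2) * T + s - m * T) (M.act VA.vac (T + m * T) w)
            - ((-1 : ℂ) ^ (-2 : ℤ)) • M.act VA.vac ((-2) * T + T - m * T)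
                (M.act u (s + m * T) w)))
        = - M.act u s w := by
      refine (finsum_eq_sum_of_support_subset _
        (s := ({0} : Finset ℕ)) ?_).trans ?_
      · intro m hm
        simp only [Function.mem_support, ne_eq] at hm
        by_contra hmem
        simp only [Finset.coe_singleton, Set.mem_singleton_iff] at hmem
        have h1 : M.act VA.vac ((T : ℤ) + m * T) w = 0 := by
          apply M.vac_act'
          have : (0 : ℤ) ≤ (m : ℤ) * T := by positivity
          omega
        have h2 : M.act VA.vac ((-2) * T + T - m * T) (M.act u (s + m * T) w) = 0 := by
          apply M.vac_act'
          have hm1 : (1 : ℤ) ≤ (m : ℤ) := by exact_mod_cast Nat.one_le_iff_ne_zero.2 hmem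
          have : (1 : ℤ) * T ≤ (m : ℤ) * T :=
            mul_le_mul_of_nonneg_right hm1 (by positivity)
          omega
        rw [h1, h2] at hm
        simp at hm
      · rw [Finset.sum_singleton]
        have h1 : M.act VA.vac ((T : ℤ) + (0 : ℕ) * T) w = 0 := by
          apply M.vac_act'
          push_cast
          omega
        have h2 : ((-2 : ℤ)) * T + T - ((0 : ℕ) : ℤ) * T = -(T : ℤ) := by push_cast; ring
        rw [h1, h2, M.vac_act]
        have h3 : ((-1 : ℂ)) ^ (-2 : ℤ) = 1 := by norm_num
        rw [h3]
        norm_num [qchoose_zero]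
    rw [hL, hR] at E
    have hTQ : (T : ℚ) ≠ 0 := by exact_mod_cast hT.ne'
    have hks : (k : ℚ) / T = (s : ℚ) / T + 1 := by
      field_simp
      push_cast [hs]
      ring
    have hcast : (-(((k : ℚ) / T : ℚ) : ℂ)) = -(1 + (((s : ℚ) / T : ℚ) : ℂ)) := by
      rw [hks]
      push_cast
      ring
    rw [hcast, eq_sub_of_add_eq E]
    module
  · -- non-congruent case: both sides vanish
    have h1 : M.act (VA.Y u (-2) VA.vac) k = 0 := M.eigen _ r hr hDu k hk
    have h2 : M.act u (k - T) = 0 := by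
      apply M.eigen u r hr hu
      intro hc
      apply hk
      show k % (T : ℤ) = (r : ℤ) % (T : ℤ)
      rwa [Int.ModEq, Int.sub_emod_right] at hc
    rw [h1, h2, smul_zero]

/-- Lemma 3.2: for any `g`-twisted `V`-module `M`,
`Y_M(𝒟v, x) = (d/dx) Y_M(v, x)`, i.e. in components
`(𝒟v)_n = -n · v_{n-1}` for `n ∈ (1/T)ℤ` (here `n = k/T`). -/
theorem stmt12 {V W : Type*} [AddCommGroup V] [Module ℂ V]
    [AddCommGroup W] [Module ℂ W]
    (VA : VertexAlgebra V) (T : ℕ) (hT : 0 < T) (g : V ≃ₗ[ℂ] V)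
    (hvac : g VA.vac = VA.vac)
    (hY : ∀ (u : V) (n : ℤ) (v : V), g (VA.Y u n v) = VA.Y (g u) n (g v))
    (hord : ∀ v, (fun x => g x)^[T] v = v)
    (M : TwistedModule VA T g W) :
    ∀ (v : V) (k : ℤ),
      M.act (VA.Y v (-2) VA.vac) k
        = (-(((k : ℚ) / T : ℚ) : ℂ)) • M.act v (k - T) := by
  intro v k
  set ω : ℂ := Complex.exp (2 * Real.pi * Complex.I / T) with hωdef
  have hprim : IsPrimitiveRoot ω T := Complex.isPrimitiveRoot_exp T hT.ne'
  have hωT : ω ^ T = 1 := hprim.pow_eq_one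
  have hω0 : ω ≠ 0 := Complex.exp_ne_zero _
  set ζ : ℂ := ω⁻¹ with hζdef
  have hζT : ζ ^ T = 1 := by rw [hζdef, inv_pow, hωT, inv_one]
  set L : V →ₗ[ℂ] V := g.toLinearMap with hLdef
  have hLT : ∀ x : V, (L ^ T) x = x := by
    intro x
    rw [Module.End.pow_apply]
    exact hord x
  set P : ℕ → V := fun r => (T : ℂ)⁻¹ • ∑ j ∈ Finset.range T, ζ ^ (r * j) • (L ^ j) v
    with hPdef
  -- the eigenvector components sum to v
  have hsum : (∑ r ∈ Finset.range T, P r) = v := by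
    rw [hPdef]
    rw [← Finset.smul_sum, Finset.sum_comm]
    have hinner : ∀ j ∈ Finset.range T,
        (∑ r ∈ Finset.range T, ζ ^ (r * j) • (L ^ j) v)
          = (∑ r ∈ Finset.range T, (ζ ^ j) ^ r) • (L ^ j) v := by
      intro j _
      rw [Finset.sum_smul]
      refine Finset.sum_congr rfl fun r _ => ?_
      rw [← pow_mul, mul_comm j r]
    rw [Finset.sum_congr rfl hinner]
    have hgeom : ∀ j ∈ Finset.range T, j ≠ 0 →
        ((∑ r ∈ Finset.range T, (ζ ^ j) ^ r) • (L ^ j) v) = 0 := by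
      intro j hj hj0
      have hjT : j < T := Finset.mem_range.1 hj
      have hne1 : ζ ^ j ≠ 1 := by
        rw [hζdef, inv_pow]
        simp only [ne_eq, inv_eq_one]
        exact hprim.pow_ne_one_of_pos_of_lt hj0 hjT
      rw [geom_sum_eq hne1, ← pow_mul, mul_comm j T, pow_mul, hζT, one_pow,
        sub_self, zero_div, zero_smul]
    rw [Finset.sum_eq_single_of_mem 0 (Finset.mem_range.2 hT) hgeom]
    have hTC : (T : ℂ) ≠ 0 := by exact_mod_cast hT.ne'
    simp only [pow_zero, one_pow, Finset.sum_const, Finset.card_range, nsmul_eq_mul, mul_one,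
      Module.End.one_apply]
    rw [smul_smul, inv_mul_cancel₀ hTC, one_smul]
  -- each component is an eigenvector
  have hgP : ∀ r : ℕ, g (P r) = Complex.exp (2 * Real.pi * Complex.I * r / T) • P r := by
    intro r
    have hexp : Complex.exp (2 * Real.pi * Complex.I * r / T) = ω ^ r := by
      rw [hωdef, ← Complex.exp_nat_mul]
      ring_nf
    have hcoef : ∀ j : ℕ, ω ^ r * ζ ^ (r * (j + 1)) = ζ ^ (r * j) := by
      intro j
      rw [Nat.mul_succ, pow_add, ← mul_assoc, mul_comm (ω ^ r) (ζ ^ (r * j)),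
        mul_assoc, hζdef, ← mul_pow, mul_inv_cancel₀ hω0, one_pow, mul_one]
    have hterm : ∀ j : ℕ, ζ ^ (r * j) • g ((L ^ j) v)
        = ω ^ r • (ζ ^ (r * (j + 1)) • (L ^ (j + 1)) v) := by
      intro j
      have hg : g ((L ^ j) v) = (L ^ (j + 1)) v := by
        rw [pow_succ', Module.End.mul_apply]
        rfl
      rw [hg, smul_smul, hcoef]
    have haT : ζ ^ (r * T) • (L ^ T) v = ζ ^ (r * 0) • (L ^ 0) v := by
      rw [mul_comm r T, pow_mul, hζT, one_pow, hLT]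
      simp
    have main : (∑ j ∈ Finset.range T, ζ ^ (r * j) • g ((L ^ j) v))
        = ω ^ r • ∑ j ∈ Finset.range T, ζ ^ (r * j) • (L ^ j) v := by
      rw [Finset.sum_congr rfl fun j _ => hterm j, ← Finset.smul_sum]
      congr 1
      calc (∑ j ∈ Finset.range T, ζ ^ (r * (j + 1)) • (L ^ (j + 1)) v)
          = (∑ j ∈ Finset.range (T + 1), ζ ^ (r * j) • (L ^ j) v)
              - ζ ^ (r * 0) • (L ^ 0) v := by
            rw [Finset.sum_range_succ' (fun j => ζ ^ (r * j) • (L ^ j) v) T]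
            abel
        _ = ∑ j ∈ Finset.range T, ζ ^ (r * j) • (L ^ j) v := by
            rw [Finset.sum_range_succ, haT]
            abel
    rw [hexp]
    calc g (P r) = (T : ℂ)⁻¹ • ∑ j ∈ Finset.range T, ζ ^ (r * j) • g ((L ^ j) v) := by
          simp only [hPdef, map_smul, map_sum]
      _ = (T : ℂ)⁻¹ • (ω ^ r • ∑ j ∈ Finset.range T, ζ ^ (r * j) • (L ^ j) v) := by
          rw [main]
      _ = ω ^ r • P r := by
          simp only [hPdef]
          rw [smul_comm]
  -- assemble
  have hv : v = ∑ r ∈ Finset.range T, P r := hsum.symm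
  have hterm : ∀ r ∈ Finset.range T,
      M.act (VA.Y (P r) (-2) VA.vac) k
        = (-(((k : ℚ) / T : ℚ) : ℂ)) • M.act (P r) (k - T) := fun r hr =>
    key_eigen VA T hT g hvac hY M (P r) r (Finset.mem_range.1 hr) (hgP r) k
  conv_lhs => rw [hv]
  simp only [map_sum, Finset.sum_apply, LinearMap.sum_apply]
  rw [Finset.sum_congr rfl hterm, ← Finset.smul_sum]
  congr 1
  conv_rhs => rw [hv]
  simp only [map_sum, Finset.sum_apply]
end
end
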